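/- Let N be square-free. For every rational u/v in lowest terms there exists a divisor Q of N with gcd(Q, N/Q) = 1 and an Atkin–Lehner matrix ω_Q = (Qx, y; Nz, Qw) with integer entries and determinant Q such that the rational ω_Q(u/v), in lowest terms, has denominator divisible by N. Consequently the group generated by Γ₀(N) and the Atkin–Lehner involutions acts transitively on ℚ. -/

import Mathlib

open Matrix

local notation "SL2R" => Matrix.SpecialLinearGroup (Fin 2) ℝ

/-- Möbius action of `SL₂(ℝ)` on `ℝ ∪ {∞}` (with `none = ∞`). -/
noncomputable def mobROpt (g : SL2R) : Option ℝ → Option ℝ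
  | none => if g.1 1 0 = 0 then none else some (g.1 0 0 / g.1 1 0)
  | some x => if g.1 1 0 * x + g.1 1 1 = 0 then none
      else some ((g.1 0 0 * x + g.1 0 1) / (g.1 1 0 * x + g.1 1 1))

/-- The image of `Γ₀(N)` in `SL₂(ℝ)`. -/
def Gamma0R (N : ℕ) : Set SL2R :=
  {g : SL2R | (∀ i j, ∃ n : ℤ, g.1 i j = (n : ℝ)) ∧ ∃ n : ℤ, g.1 1 0 = ((N : ℤ) * n : ℤ)}

/-- Atkin–Lehner involutions for `Γ₀(N)`, normalized to determinant one. -/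
def ALset (N : ℕ) : Set SL2R :=
  {g : SL2R | ∃ Q x y z w : ℤ, 0 < Q ∧ Q ∣ (N : ℤ) ∧ IsCoprime Q ((N : ℤ) / Q) ∧
    Q ^ 2 * x * w - (N : ℤ) * y * z = Q ∧
    g.1 0 0 = (Q * x : ℤ) / Real.sqrt (Q : ℝ) ∧ g.1 0 1 = (y : ℝ) / Real.sqrt (Q : ℝ) ∧
    g.1 1 0 = ((N : ℤ) * z : ℤ) / Real.sqrt (Q : ℝ) ∧ g.1 1 1 = (Q * w : ℤ) / Real.sqrt (Q : ℝ)}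

/-!
Write `N = Q * M` with `M = gcd(N, v)`. Since `N` is squarefree, `Q` is coprime to `v`, hence to
`M`. An Atkin–Lehner matrix `ω_Q` with `z = 1` sends `u/v` to `n/D` with `D = Q (M u + w v)`,
where `w ∈ {1, 1 + M}` makes `D ≠ 0`. Then `N ∣ D` because `M ∣ v`, while `n = Q x u + y v` is
coprime to both `Q` and `M`.
So the reduced denominator of `ω_Q(u/v)` is still divisible by `N`, and an element of `Γ₀(N)` with
bottom row `(-den, num)` sends that rational to `∞`. Every rational thus lies in the orbit of `∞`.
-/

-- `OnePoint ℝ` is `Option ℝ` by definition, so `mobROpt` is Mathlib's action of `GL₂` on the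
-- projective line; the `show OnePoint ℝ from _` below selects that action.
theorem mobROpt_eq_smul (g : SL2R) (x : OnePoint ℝ) :
    mobROpt g x = (g : GL (Fin 2) ℝ) • x := by
  cases x with
  | infty =>
    simp only [mobROpt, OnePoint.smul_infty_eq_ite, SpecialLinearGroup.coe_GL_coe_matrix]
    rfl
  | coe t =>
    simp only [mobROpt, OnePoint.smul_some_eq_ite, SpecialLinearGroup.coe_GL_coe_matrix]
    rfl

theorem mobROpt_mul (g h : SL2R) (x : Option ℝ) :
    mobROpt (g * h) x = mobROpt g (mobROpt h x) := by
  rw [mobROpt_eq_smul (g * h) x, mobROpt_eq_smul h x, mobROpt_eq_smul g, map_mul]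
  exact mul_smul _ _ (show OnePoint ℝ from x)

theorem mobROpt_inv_of_eq {g : SL2R} {x y : Option ℝ} (h : mobROpt g y = x) :
    mobROpt g⁻¹ x = y := by
  rw [← h, mobROpt_eq_smul g y, mobROpt_eq_smul, map_inv]
  exact inv_smul_smul _ (show OnePoint ℝ from y)

theorem mobROpt_some_div (g : SL2R) (u : ℝ) {v : ℝ} (hv : v ≠ 0) :
    mobROpt g (some (u / v)) = if g 1 0 * u + g 1 1 * v = 0 then none
      else some ((g 0 0 * u + g 0 1 * v) / (g 1 0 * u + g 1 1 * v)) := by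
  have hden : g 1 0 * (u / v) + g 1 1 = (g 1 0 * u + g 1 1 * v) / v := by field_simp
  have hnum : g 0 0 * (u / v) + g 0 1 = (g 0 0 * u + g 0 1 * v) / v := by field_simp
  simp only [mobROpt, hden, hnum, div_eq_zero_iff, hv, or_false, div_div_div_cancel_right₀ hv]

theorem Squarefree.exists_eq_mul_isCoprime_dvd {N : ℕ} (hN : Squarefree N) {v : ℤ}
    (hv : v ≠ 0) : ∃ Q M : ℕ, N = Q * M ∧ IsCoprime (Q : ℤ) v ∧ (M : ℤ) ∣ v :=
  ⟨N / N.gcd v.natAbs, N.gcd v.natAbs, (Nat.div_mul_cancel (Nat.gcd_dvd_left _ _)).symm,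
    Int.isCoprime_iff_gcd_eq_one.mpr
      (Nat.coprime_div_gcd_of_squarefree hN (Int.natAbs_ne_zero.mpr hv)),
    Int.natCast_dvd.mpr (Nat.gcd_dvd_right _ _)⟩

theorem exists_isCoprime_add_mul_ne_zero {R : Type*} [CommRing R] [NoZeroDivisors R]
    (a : R) {M v : R} (hM : M ≠ 0) (hv : v ≠ 0) : ∃ w, IsCoprime w M ∧ a + w * v ≠ 0 := by
  by_cases h : a + v = 0
  · refine ⟨1 + M, ⟨1, -1, by ring⟩, ?_⟩
    rw [show a + (1 + M) * v = M * v by linear_combination h]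
    exact mul_ne_zero hM hv
  · exact ⟨1, isCoprime_one_left, by rwa [one_mul]⟩

theorem exists_atkinLehner_entries {Q M u v : ℤ} (hQ : Q ≠ 0) (hv : v ≠ 0)
    (hQv : IsCoprime Q v) (hMv : M ∣ v) (huv : IsCoprime u v) :
    ∃ x y z w : ℤ, Q ^ 2 * x * w - Q * M * y * z = Q ∧
      Q * M * z * u + Q * w * v ≠ 0 ∧ Q * M ∣ Q * M * z * u + Q * w * v ∧
      IsCoprime (Q * x * u + y * v) (Q * M) := by
  obtain ⟨v', rfl⟩ := hMv
  have hM : M ≠ 0 := left_ne_zero_of_mul hv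
  have hQM : IsCoprime Q M := hQv.of_isCoprime_of_dvd_right (dvd_mul_right M v')
  obtain ⟨w, hwM, hD⟩ := exists_isCoprime_add_mul_ne_zero (M * u) hM hv
  obtain ⟨a, b, hab⟩ := hQM.mul_left hwM
  refine ⟨a, -b, 1, w, by linear_combination Q * hab, ?_, ⟨u + w * v', by ring⟩, ?_⟩
  · rw [show Q * M * 1 * u + Q * w * (M * v') = Q * (M * u + w * (M * v')) by ring]
    exact mul_ne_zero hQ hD
  · have hbQ : IsCoprime (-b) Q := ⟨-M, a * w, by linear_combination hab⟩
    have haM : IsCoprime a M := ⟨Q * w, b, by linear_combination hab⟩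
    have huM : IsCoprime u M := huv.of_isCoprime_of_dvd_right (dvd_mul_right M v')
    refine IsCoprime.mul_right ?_ ?_
    · rw [show Q * a * u + -b * (M * v') = -b * (M * v') + Q * (a * u) by ring]
      exact (hbQ.mul_left hQv.symm).add_mul_left_left (a * u)
    · rw [show Q * a * u + -b * (M * v') = Q * a * u + M * (-b * v') by ring]
      exact ((hQM.mul_left haM).mul_left huM).add_mul_left_left (-b * v')

theorem Rat.dvd_den_intCast_div {N : ℕ} {n D : ℤ} (hD : D ≠ 0) (hND : (N : ℤ) ∣ D)
    (hn : IsCoprime n N) : N ∣ ((n : ℚ) / D).den := by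
  set r : ℚ := (n : ℚ) / D
  have hcross : r.num * D = n * r.den := by
    have : (r.num : ℚ) * D = n * r.den := by
      rw [← Rat.mul_den_eq_num r, mul_right_comm, div_mul_cancel₀ _ (Int.cast_ne_zero.mpr hD)]
    exact_mod_cast this
  have hrD : (r.den : ℤ) ∣ D :=
    r.isCoprime_num_den.symm.dvd_of_dvd_mul_left ⟨n, by rw [hcross, mul_comm]⟩
  obtain ⟨m, hm⟩ := hrD
  have hnm : n = r.num * m :=
    mul_right_cancel₀ (Int.natCast_ne_zero.mpr r.den_nz) (by rw [← hcross, hm]; ring)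
  have hmN : IsCoprime m N := hn.of_isCoprime_of_dvd_left ⟨r.num, by rw [hnm, mul_comm]⟩
  exact Int.natCast_dvd_natCast.mp (hmN.symm.dvd_of_dvd_mul_right (hm ▸ hND))

theorem exists_atkinLehner_dvd_den (N : ℕ) (hsq : Squarefree N) (u v : ℤ) (hv : v ≠ 0)
    (huv : IsCoprime u v) :
    ∃ Q x y z w : ℤ, 0 < Q ∧ Q ∣ (N : ℤ) ∧ IsCoprime Q ((N : ℤ) / Q) ∧
      Q ^ 2 * x * w - (N : ℤ) * y * z = Q ∧
      (N : ℤ) * z * u + Q * w * v ≠ 0 ∧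
      N ∣ (((Q * x * u + y * v : ℤ) : ℚ) / (((N : ℤ) * z * u + Q * w * v : ℤ) : ℚ)).den := by
  obtain ⟨Q, M, rfl, hQv, hMv⟩ := hsq.exists_eq_mul_isCoprime_dvd hv
  have hQ : (0 : ℤ) < Q :=
    Int.natCast_pos.mpr (Nat.pos_of_ne_zero (left_ne_zero_of_mul hsq.ne_zero))
  obtain ⟨x, y, z, w, hdet, hD, hND, hn⟩ := exists_atkinLehner_entries hQ.ne' hv hQv hMv huv
  simp only [Nat.cast_mul]
  refine ⟨Q, x, y, z, w, hQ, dvd_mul_right _ _, ?_, hdet, hD, ?_⟩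
  · rw [Int.mul_ediv_cancel_left _ hQ.ne']
    exact hQv.of_isCoprime_of_dvd_right hMv
  · exact Rat.dvd_den_intCast_div hD (by rwa [Nat.cast_mul]) (by rwa [Nat.cast_mul])

noncomputable def atkinLehner (N : ℕ) (Q x y z w : ℤ) (hQ : 0 < Q)
    (hdet : Q ^ 2 * x * w - (N : ℤ) * y * z = Q) : SL2R :=
  ⟨(Real.sqrt Q)⁻¹ • !![((Q * x : ℤ) : ℝ), y; ((N * z : ℤ) : ℝ), ((Q * w : ℤ) : ℝ)], by
    have hQ' : (0 : ℝ) < Q := by exact_mod_cast hQ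
    have hdet' : (Q : ℝ) ^ 2 * x * w - N * y * z = Q := by exact_mod_cast hdet
    rw [det_smul, det_fin_two_of, Fintype.card_fin, inv_pow, Real.sq_sqrt hQ'.le]
    push_cast
    field_simp
    linear_combination hdet'⟩

theorem atkinLehner_mem_ALset {N : ℕ} {Q x y z w : ℤ} (hQ : 0 < Q) (hQN : Q ∣ (N : ℤ))
    (hcop : IsCoprime Q ((N : ℤ) / Q)) (hdet : Q ^ 2 * x * w - (N : ℤ) * y * z = Q) :
    atkinLehner N Q x y z w hQ hdet ∈ ALset N := by
  refine ⟨Q, x, y, z, w, hQ, hQN, hcop, hdet, ?_, ?_, ?_, ?_⟩ <;>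
    simp [atkinLehner, div_eq_inv_mul]

theorem mobROpt_atkinLehner {N : ℕ} {Q x y z w : ℤ} (hQ : 0 < Q)
    (hdet : Q ^ 2 * x * w - (N : ℤ) * y * z = Q) {u v : ℤ} (hv : v ≠ 0)
    (hD : (N : ℤ) * z * u + Q * w * v ≠ 0) :
    mobROpt (atkinLehner N Q x y z w hQ hdet) (some ((u : ℝ) / v)) =
      some (((Q * x * u + y * v : ℤ) : ℝ) / (((N : ℤ) * z * u + Q * w * v : ℤ) : ℝ)) := by
  have hs : (Real.sqrt Q)⁻¹ ≠ 0 := inv_ne_zero (Real.sqrt_ne_zero'.mpr (by exact_mod_cast hQ))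
  have hD' : ((N : ℤ) * z * u + Q * w * v : ℤ) ≠ (0 : ℝ) := by exact_mod_cast hD
  rw [mobROpt_some_div _ _ (Int.cast_ne_zero.mpr hv)]
  simp only [atkinLehner, Matrix.smul_apply, of_apply, cons_val', cons_val_zero, cons_val_one,
    empty_val', cons_val_fin_one, smul_eq_mul]
  push_cast at hD' ⊢
  set s := (Real.sqrt Q)⁻¹
  rw [show s * (N * z) * u + s * (Q * w) * v = s * (N * z * u + Q * w * v) by ring,
    show s * (Q * x) * u + s * y * v = s * (Q * x * u + y * v) by ring,
    if_neg (mul_ne_zero hs hD'), mul_div_mul_left _ _ hs]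

theorem map_mem_Gamma0R {N : ℕ} (g : SpecialLinearGroup (Fin 2) ℤ) (hg : (N : ℤ) ∣ g 1 0) :
    SpecialLinearGroup.map (Int.castRingHom ℝ) g ∈ Gamma0R N := by
  obtain ⟨k, hk⟩ := hg
  exact ⟨fun i j ↦ ⟨g i j, rfl⟩, k, by simp [hk]⟩

theorem exists_mem_Gamma0R_mobROpt_eq_none {N : ℕ} {q : ℚ} (hN : N ∣ q.den) :
    ∃ γ ∈ Gamma0R N, mobROpt γ (some (q : ℝ)) = none := by
  obtain ⟨g, -, hg⟩ := ModularGroup.bottom_row_surj (R := ℤ)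
    (show ![-(q.den : ℤ), q.num] ∈ {cd | IsCoprime (cd 0) (cd 1)} from
      q.isCoprime_num_den.symm.neg_left)
  have hg10 : g 1 0 = -q.den := congrFun hg 0
  have hg11 : g 1 1 = q.num := congrFun hg 1
  refine ⟨_, map_mem_Gamma0R g ?_, ?_⟩
  · rw [hg10, dvd_neg]
    exact Int.natCast_dvd_natCast.mpr hN
  · rw [Rat.cast_def, mobROpt_some_div _ _ (Nat.cast_ne_zero.mpr q.den_nz), if_pos]
    simp only [SpecialLinearGroup.map_apply_coe, RingHom.mapMatrix_apply, Int.coe_castRingHom,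
      map_apply, hg10, hg11, Int.cast_neg, Int.cast_natCast]
    ring

theorem exists_mem_closure_mobROpt_eq_none {N : ℕ} (hsq : Squarefree N) (q : ℚ) :
    ∃ g ∈ Subgroup.closure (Gamma0R N ∪ ALset N), mobROpt g (some (q : ℝ)) = none := by
  have hv : (q.den : ℤ) ≠ 0 := Nat.cast_ne_zero.mpr q.den_nz
  obtain ⟨Q, x, y, z, w, hQ, hQN, hcop, hdet, hD, hden⟩ :=
    exists_atkinLehner_dvd_den N hsq q.num q.den hv q.isCoprime_num_den
  obtain ⟨γ, hγ, hγq⟩ := exists_mem_Gamma0R_mobROpt_eq_none hden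
  refine ⟨γ * atkinLehner N Q x y z w hQ hdet,
    Subgroup.mul_mem _ (Subgroup.subset_closure (Or.inl hγ))
      (Subgroup.subset_closure (Or.inr (atkinLehner_mem_ALset hQ hQN hcop hdet))), ?_⟩
  rw [mobROpt_mul, Rat.cast_def, ← Int.cast_natCast, mobROpt_atkinLehner hQ hdet hv hD, ← hγq]
  push_cast
  rfl

theorem stmt15_general (N : ℕ) (hsq : Squarefree N) :
    (∀ u v : ℤ, v ≠ 0 → IsCoprime u v →
      ∃ Q x y z w : ℤ, 0 < Q ∧ Q ∣ (N : ℤ) ∧ IsCoprime Q ((N : ℤ) / Q) ∧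
        Q ^ 2 * x * w - (N : ℤ) * y * z = Q ∧
        (N : ℤ) * z * u + Q * w * v ≠ 0 ∧
        N ∣ (((Q * x * u + y * v : ℤ) : ℚ) / (((N : ℤ) * z * u + Q * w * v : ℤ) : ℚ)).den) ∧
    (∀ q₁ q₂ : ℚ, ∃ g ∈ Subgroup.closure (Gamma0R N ∪ ALset N),
      mobROpt g (some (q₁ : ℝ)) = some ((q₂ : ℝ))) := by
  refine ⟨exists_atkinLehner_dvd_den N hsq, fun q₁ q₂ ↦ ?_⟩
  obtain ⟨g₁, hg₁, hq₁⟩ := exists_mem_closure_mobROpt_eq_none hsq q₁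
  obtain ⟨g₂, hg₂, hq₂⟩ := exists_mem_closure_mobROpt_eq_none hsq q₂
  refine ⟨g₂⁻¹ * g₁, Subgroup.mul_mem _ (Subgroup.inv_mem _ hg₂) hg₁, ?_⟩
  rw [mobROpt_mul, hq₁, mobROpt_inv_of_eq hq₂]

theorem stmt15 (N : ℕ) (hN : 1 ≤ N) (hsq : Squarefree N) :
    (∀ u v : ℤ, v ≠ 0 → IsCoprime u v →
      ∃ Q x y z w : ℤ, 0 < Q ∧ Q ∣ (N : ℤ) ∧ IsCoprime Q ((N : ℤ) / Q) ∧
        Q ^ 2 * x * w - (N : ℤ) * y * z = Q ∧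
        (N : ℤ) * z * u + Q * w * v ≠ 0 ∧
        N ∣ (((Q * x * u + y * v : ℤ) : ℚ) / (((N : ℤ) * z * u + Q * w * v : ℤ) : ℚ)).den) ∧
    (∀ q₁ q₂ : ℚ, ∃ g ∈ Subgroup.closure (Gamma0R N ∪ ALset N),
      mobROpt g (some (q₁ : ℝ)) = some ((q₂ : ℝ))) :=
  stmt15_general N hsq
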